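/- Energy conservation for the uncontrolled electrostatic Euler–Bernoulli beam. Let (v, w) be a smooth solution on [0,L] × [0,T] of ρh·v̈ − α11h·(v_x + ½w_x²)_x = 0 and ρh·ẅ − (ρh³/12)ẅ_xx + (α1h³/12)w_xxxx − ( α11h(v_x + ½w_x²)·w_x )_x = 0 on (0,L), with v(0,t) = w(0,t) = w_x(0,t) = 0 and the homogeneous boundary conditions w_xx(L,t) = 0, (v_x + ½w_x²)(L,t) = 0, and [(ρh³/12)ẅ_x − (α1h³/12)w_xxx](L,t) = 0 (i.e., V ≡ m ≡ g ≡ 0). Then the energy E(t) = (h/2)∫₀ᴸ[ ρ( v̇² + (h²/12)ẇ_x² + ẇ² ) + α11(v_x + ½w_x²)² + (α1h²/12)w_xx² ]dx is constant in time: E(t) = E(0) for all t ∈ [0,T]. -/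

import Mathlib

/-- Partial derivative in the first (spatial) variable. -/
noncomputable def pdx (f : ℝ → ℝ → ℝ) : ℝ → ℝ → ℝ :=
  fun x t => deriv (fun y => f y t) x

/-- Partial derivative in the second (time) variable. -/
noncomputable def pdt (f : ℝ → ℝ → ℝ) : ℝ → ℝ → ℝ :=
  fun x t => deriv (fun τ => f x τ) t

/-- The total energy of the electrostatic Euler–Bernoulli piezoelectric
beam. -/
noncomputable def energyEB (L h ρ α11 α1 : ℝ) (v w : ℝ → ℝ → ℝ) : ℝ → ℝ :=
  fun t => (h / 2) * ∫ x in (0:ℝ)..L,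
    (ρ * ((pdt v x t) ^ 2 + (h ^ 2 / 12) * (pdt (pdx w) x t) ^ 2
        + (pdt w x t) ^ 2)
      + α11 * (pdx v x t + (pdx w x t) ^ 2 / 2) ^ 2
      + (α1 * h ^ 2 / 12) * (pdx (pdx w) x t) ^ 2)

open Function Set MeasureTheory Metric Filter Topology

namespace EBaux

variable {f : ℝ → ℝ → ℝ}

lemma hasDerivAt_slice_x (hf : ContDiff ℝ (⊤ : ℕ∞) (uncurry f)) (x t : ℝ) :
    HasDerivAt (fun y => f y t) (fderiv ℝ (uncurry f) (x, t) (1, 0)) x := by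
  have h1 : HasFDerivAt (uncurry f) (fderiv ℝ (uncurry f) (x, t)) (x, t) :=
    (hf.differentiable (by simp) (x, t)).hasFDerivAt
  have h2 : HasDerivAt (fun y : ℝ => ((y, t) : ℝ × ℝ)) (1, 0) x :=
    (hasDerivAt_id x).prodMk (hasDerivAt_const x t)
  exact h1.comp_hasDerivAt x h2

lemma hasDerivAt_slice_t (hf : ContDiff ℝ (⊤ : ℕ∞) (uncurry f)) (x t : ℝ) :
    HasDerivAt (fun τ => f x τ) (fderiv ℝ (uncurry f) (x, t) (0, 1)) t := by
  have h1 : HasFDerivAt (uncurry f) (fderiv ℝ (uncurry f) (x, t)) (x, t) :=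
    (hf.differentiable (by simp) (x, t)).hasFDerivAt
  have h2 : HasDerivAt (fun τ : ℝ => ((x, τ) : ℝ × ℝ)) (0, 1) t :=
    (hasDerivAt_const t x).prodMk (hasDerivAt_id t)
  exact h1.comp_hasDerivAt t h2

lemma pdx_eq (hf : ContDiff ℝ (⊤ : ℕ∞) (uncurry f)) (x t : ℝ) :
    pdx f x t = fderiv ℝ (uncurry f) (x, t) (1, 0) :=
  (hasDerivAt_slice_x hf x t).deriv

lemma pdt_eq (hf : ContDiff ℝ (⊤ : ℕ∞) (uncurry f)) (x t : ℝ) :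
    pdt f x t = fderiv ℝ (uncurry f) (x, t) (0, 1) :=
  (hasDerivAt_slice_t hf x t).deriv

lemma hasDerivAt_pdx (hf : ContDiff ℝ (⊤ : ℕ∞) (uncurry f)) (x t : ℝ) :
    HasDerivAt (fun y => f y t) (pdx f x t) x := by
  rw [pdx_eq hf]; exact hasDerivAt_slice_x hf x t

lemma hasDerivAt_pdt (hf : ContDiff ℝ (⊤ : ℕ∞) (uncurry f)) (x t : ℝ) :
    HasDerivAt (fun τ => f x τ) (pdt f x t) t := by
  rw [pdt_eq hf]; exact hasDerivAt_slice_t hf x t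

lemma contDiff_pdx (hf : ContDiff ℝ (⊤ : ℕ∞) (uncurry f)) :
    ContDiff ℝ (⊤ : ℕ∞) (uncurry (pdx f)) := by
  have h1 : ContDiff ℝ (⊤ : ℕ∞) (fun p : ℝ × ℝ => fderiv ℝ (uncurry f) p ((1 : ℝ), (0 : ℝ))) :=
    (hf.fderiv_right (by simp)).clm_apply contDiff_const
  have h2 : uncurry (pdx f) = fun p : ℝ × ℝ => fderiv ℝ (uncurry f) p (1, 0) := by
    funext p
    exact pdx_eq hf p.1 p.2
  rw [h2]; exact h1

lemma contDiff_pdt (hf : ContDiff ℝ (⊤ : ℕ∞) (uncurry f)) :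
    ContDiff ℝ (⊤ : ℕ∞) (uncurry (pdt f)) := by
  have h1 : ContDiff ℝ (⊤ : ℕ∞) (fun p : ℝ × ℝ => fderiv ℝ (uncurry f) p ((0 : ℝ), (1 : ℝ))) :=
    (hf.fderiv_right (by simp)).clm_apply contDiff_const
  have h2 : uncurry (pdt f) = fun p : ℝ × ℝ => fderiv ℝ (uncurry f) p (0, 1) := by
    funext p
    exact pdt_eq hf p.1 p.2
  rw [h2]; exact h1

/-- Schwarz symmetry of second derivatives. -/
lemma pdt_pdx_comm (hf : ContDiff ℝ (⊤ : ℕ∞) (uncurry f)) (x t : ℝ) :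
    pdt (pdx f) x t = pdx (pdt f) x t := by
  set F := uncurry f with hF
  set A := fun p : ℝ × ℝ => fderiv ℝ F p with hA
  have hAcd : ContDiff ℝ (⊤ : ℕ∞) A := hf.fderiv_right (by simp)
  have hA' : HasFDerivAt A (fderiv ℝ A (x, t)) (x, t) :=
    (hAcd.differentiable (by simp) _).hasFDerivAt
  have hsymm := second_derivative_symmetric
    (fun y => (hf.differentiable (by simp) y).hasFDerivAt) hA' ((1:ℝ), (0:ℝ)) ((0:ℝ), (1:ℝ))
  -- pdt (pdx f) x t = fderiv A (x,t) (0,1) (1,0)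
  have e1 : pdt (pdx f) x t = fderiv ℝ A (x, t) (0, 1) (1, 0) := by
    have hc : HasFDerivAt (fun p : ℝ × ℝ => A p (1, 0))
        ((ContinuousLinearMap.apply ℝ ℝ ((1:ℝ), (0:ℝ))).comp (fderiv ℝ A (x, t))) (x, t) :=
      (ContinuousLinearMap.apply ℝ ℝ ((1:ℝ), (0:ℝ))).hasFDerivAt.comp (x, t) hA'
    have hcurve : HasDerivAt (fun τ : ℝ => ((x, τ) : ℝ × ℝ)) (0, 1) t :=
      (hasDerivAt_const t x).prodMk (hasDerivAt_id t)
    have h3 := hc.comp_hasDerivAt t hcurve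
    have h4 : ((fun p : ℝ × ℝ => A p (1, 0)) ∘ Prod.mk x) = fun τ => pdx f x τ := by
      funext τ; exact (pdx_eq hf x τ).symm
    rw [h4] at h3
    have : pdt (pdx f) x t = _ := h3.deriv
    simpa using this
  have e2 : pdx (pdt f) x t = fderiv ℝ A (x, t) (1, 0) (0, 1) := by
    have hc : HasFDerivAt (fun p : ℝ × ℝ => A p (0, 1))
        ((ContinuousLinearMap.apply ℝ ℝ ((0:ℝ), (1:ℝ))).comp (fderiv ℝ A (x, t))) (x, t) :=
      (ContinuousLinearMap.apply ℝ ℝ ((0:ℝ), (1:ℝ))).hasFDerivAt.comp (x, t) hA'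
    have hcurve : HasDerivAt (fun y : ℝ => ((y, t) : ℝ × ℝ)) (1, 0) x :=
      (hasDerivAt_id x).prodMk (hasDerivAt_const x t)
    have h3 := hc.comp_hasDerivAt x hcurve
    have h4 : ((fun p : ℝ × ℝ => A p (0, 1)) ∘ fun y : ℝ => (y, t)) = fun y => pdt f y t := by
      funext y; exact (pdt_eq hf y t).symm
    rw [h4] at h3
    have : pdx (pdt f) x t = _ := h3.deriv
    simpa using this
  rw [e1, e2, hsymm]

/-- slice continuity in x -/
lemma cont_slice_x (hf : ContDiff ℝ (⊤ : ℕ∞) (uncurry f)) (t : ℝ) :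
    Continuous (fun x => f x t) :=
  hf.continuous.comp (continuous_id.prodMk continuous_const)

end EBaux

/-- The energy density written with the strain `s`. -/
noncomputable def EBFi (h ρ α11 α1 : ℝ) (v w s : ℝ → ℝ → ℝ) : ℝ → ℝ → ℝ :=
  fun x t => ρ * ((pdt v x t) ^ 2 + (h ^ 2 / 12) * (pdt (pdx w) x t) ^ 2
      + (pdt w x t) ^ 2)
    + α11 * (s x t) ^ 2 + (α1 * h ^ 2 / 12) * (pdx (pdx w) x t) ^ 2

/-- The energy flux. -/
noncomputable def EBG (h ρ α11 α1 : ℝ) (v w s : ℝ → ℝ → ℝ) : ℝ → ℝ → ℝ :=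
  fun y τ => 2 * α11 * pdt v y τ * s y τ
    + 2 * α11 * s y τ * pdx w y τ * pdt w y τ
    + 2 * pdt w y τ * ((ρ * h ^ 2 / 12) * pdx (pdt (pdt w)) y τ
        - (α1 * h ^ 2 / 12) * pdx (pdx (pdx w)) y τ)
    + (α1 * h ^ 2 / 6) * pdx (pdx w) y τ * pdx (pdt w) y τ

/-- Energy conservation for the uncontrolled (`V ≡ m ≡ g ≡ 0`) electrostatic
Euler–Bernoulli piezoelectric beam: the total energy is constant in time. -/
theorem energy_conservation_EB
    (L T h ρ α11 β3 γ3 α1 : ℝ)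
    (hL : 0 < L) (hT : 0 < T) (hh : 0 < h) (hρ : 0 < ρ)
    (hα11 : 0 < α11) (hβ3 : 0 < β3)
    (hα1 : α1 = α11 + γ3 ^ 2 * β3)
    (v w s : ℝ → ℝ → ℝ)
    (hv : ContDiff ℝ (⊤ : ℕ∞) (Function.uncurry v))
    (hw : ContDiff ℝ (⊤ : ℕ∞) (Function.uncurry w))
    (hs : ∀ x t, s x t = pdx v x t + (pdx w x t) ^ 2 / 2)
    (heq1 : ∀ t ∈ Set.Icc (0:ℝ) T, ∀ x ∈ Set.Ioo (0:ℝ) L,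
      ρ * h * pdt (pdt v) x t - α11 * h * pdx s x t = 0)
    (heq2 : ∀ t ∈ Set.Icc (0:ℝ) T, ∀ x ∈ Set.Ioo (0:ℝ) L,
      ρ * h * pdt (pdt w) x t - (ρ * h ^ 3 / 12) * pdx (pdx (pdt (pdt w))) x t
        + (α1 * h ^ 3 / 12) * pdx (pdx (pdx (pdx w))) x t
        - pdx (fun y τ => α11 * h * s y τ * pdx w y τ) x t = 0)
    (hclamped : ∀ t ∈ Set.Icc (0:ℝ) T,
      v 0 t = 0 ∧ w 0 t = 0 ∧ pdx w 0 t = 0)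
    (hbc1 : ∀ t ∈ Set.Icc (0:ℝ) T, pdx (pdx w) L t = 0)
    (hbc2 : ∀ t ∈ Set.Icc (0:ℝ) T, s L t = 0)
    (hbc3 : ∀ t ∈ Set.Icc (0:ℝ) T,
      (ρ * h ^ 3 / 12) * pdx (pdt (pdt w)) L t
        - (α1 * h ^ 3 / 12) * pdx (pdx (pdx w)) L t = 0) :
    ∀ t ∈ Set.Icc (0:ℝ) T,
      energyEB L h ρ α11 α1 v w t = energyEB L h ρ α11 α1 v w 0 := by
  classical
  have hne : h ≠ 0 := ne_of_gt hh
  -- smoothness of all relevant partial derivatives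
  have hvx := EBaux.contDiff_pdx hv
  have hwx := EBaux.contDiff_pdx hw
  have hvt := EBaux.contDiff_pdt hv
  have hwt := EBaux.contDiff_pdt hw
  have hwxx := EBaux.contDiff_pdx hwx
  have hwxt := EBaux.contDiff_pdx hwt
  have hwtx := EBaux.contDiff_pdt hwx
  have hwtt := EBaux.contDiff_pdt hwt
  have hwxxx := EBaux.contDiff_pdx hwxx
  have hwxxxx := EBaux.contDiff_pdx hwxxx
  have hwxtt := EBaux.contDiff_pdx hwtt
  have hwxxt := EBaux.contDiff_pdx hwxt
  have hwxxtt := EBaux.contDiff_pdx hwxtt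
  have hvtt := EBaux.contDiff_pdt hvt
  have hvxt := EBaux.contDiff_pdx hvt
  have hscd : ContDiff ℝ (⊤ : ℕ∞) (Function.uncurry s) := by
    have he : Function.uncurry s
        = fun p : ℝ × ℝ => pdx v p.1 p.2 + (pdx w p.1 p.2) ^ 2 / 2 := by
      funext p; exact hs p.1 p.2
    rw [he]
    exact hvx.add ((hwx.pow 2).div_const 2)
  have hsx := EBaux.contDiff_pdx hscd
  have hst := EBaux.contDiff_pdt hscd
  -- Schwarz symmetry facts
  have S1 : ∀ x t : ℝ, pdt (pdx w) x t = pdx (pdt w) x t := EBaux.pdt_pdx_comm hw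
  have S1f : pdt (pdx w) = pdx (pdt w) := funext fun x => funext fun t => S1 x t
  have S2 : ∀ x t : ℝ, pdt (pdt (pdx w)) x t = pdx (pdt (pdt w)) x t := by
    intro x t
    rw [S1f]
    exact EBaux.pdt_pdx_comm hwt x t
  have S3 : ∀ x t : ℝ, pdt (pdx (pdx w)) x t = pdx (pdx (pdt w)) x t := by
    intro x t
    rw [EBaux.pdt_pdx_comm hwx x t, S1f]
  have SV : ∀ x t : ℝ, pdt (pdx v) x t = pdx (pdt v) x t := EBaux.pdt_pdx_comm hv
  -- time derivative of the strain
  have hst_eq : ∀ x t : ℝ, pdt s x t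
      = pdx (pdt v) x t + pdx w x t * pdx (pdt w) x t := by
    intro x t
    have h1 : (fun τ => s x τ) = fun τ => pdx v x τ + (pdx w x τ) ^ 2 / 2 := by
      funext τ; exact hs x τ
    have h2 := (EBaux.hasDerivAt_pdt hvx x t).add
      (((EBaux.hasDerivAt_pdt hwx x t).pow 2).div_const 2)
    show deriv (fun τ => s x τ) t = _
    rw [h1, HasDerivAt.deriv (f := fun τ => pdx v x τ + pdx w x τ ^ 2 / 2) h2, SV x t, S1 x t]
    push_cast; ring
  -- spatial derivative of the nonlinear product in the second equation
  have hprod : ∀ x t : ℝ, pdx (fun y τ => α11 * h * s y τ * pdx w y τ) x t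
      = α11 * h * (pdx s x t * pdx w x t + s x t * pdx (pdx w) x t) := by
    intro x t
    have h2 := ((EBaux.hasDerivAt_pdx hscd x t).const_mul (α11 * h)).mul
      (EBaux.hasDerivAt_pdx hwx x t)
    show deriv (fun y => α11 * h * s y t * pdx w y t) x = _
    rw [HasDerivAt.deriv (f := fun y => α11 * h * s y t * pdx w y t) h2]; ring
  -- smoothness of the density and the flux
  have hvt' : ContDiff ℝ (⊤ : ℕ∞) (fun p : ℝ × ℝ => pdt v p.1 p.2) := hvt
  have hwt' : ContDiff ℝ (⊤ : ℕ∞) (fun p : ℝ × ℝ => pdt w p.1 p.2) := hwt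
  have hwtx' : ContDiff ℝ (⊤ : ℕ∞) (fun p : ℝ × ℝ => pdt (pdx w) p.1 p.2) := hwtx
  have hs' : ContDiff ℝ (⊤ : ℕ∞) (fun p : ℝ × ℝ => s p.1 p.2) := hscd
  have hwxx' : ContDiff ℝ (⊤ : ℕ∞) (fun p : ℝ × ℝ => pdx (pdx w) p.1 p.2) := hwxx
  have hwx' : ContDiff ℝ (⊤ : ℕ∞) (fun p : ℝ × ℝ => pdx w p.1 p.2) := hwx
  have hwxtt' : ContDiff ℝ (⊤ : ℕ∞) (fun p : ℝ × ℝ => pdx (pdt (pdt w)) p.1 p.2) := hwxtt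
  have hwxxx' : ContDiff ℝ (⊤ : ℕ∞) (fun p : ℝ × ℝ => pdx (pdx (pdx w)) p.1 p.2) := hwxxx
  have hwxt' : ContDiff ℝ (⊤ : ℕ∞) (fun p : ℝ × ℝ => pdx (pdt w) p.1 p.2) := hwxt
  have hFcd : ContDiff ℝ (⊤ : ℕ∞) (Function.uncurry (EBFi h ρ α11 α1 v w s)) := by
    show ContDiff ℝ (⊤ : ℕ∞) (fun p : ℝ × ℝ =>
      ρ * ((pdt v p.1 p.2) ^ 2 + (h ^ 2 / 12) * (pdt (pdx w) p.1 p.2) ^ 2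
          + (pdt w p.1 p.2) ^ 2)
        + α11 * (s p.1 p.2) ^ 2 + (α1 * h ^ 2 / 12) * (pdx (pdx w) p.1 p.2) ^ 2)
    exact ((contDiff_const.mul (((hvt'.pow 2).add
        (contDiff_const.mul (hwtx'.pow 2))).add (hwt'.pow 2))).add
      (contDiff_const.mul (hs'.pow 2))).add (contDiff_const.mul (hwxx'.pow 2))
  have hGcd : ContDiff ℝ (⊤ : ℕ∞) (Function.uncurry (EBG h ρ α11 α1 v w s)) := by
    show ContDiff ℝ (⊤ : ℕ∞) (fun p : ℝ × ℝ =>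
      2 * α11 * pdt v p.1 p.2 * s p.1 p.2
      + 2 * α11 * s p.1 p.2 * pdx w p.1 p.2 * pdt w p.1 p.2
      + 2 * pdt w p.1 p.2 * ((ρ * h ^ 2 / 12) * pdx (pdt (pdt w)) p.1 p.2
          - (α1 * h ^ 2 / 12) * pdx (pdx (pdx w)) p.1 p.2)
      + (α1 * h ^ 2 / 6) * pdx (pdx w) p.1 p.2 * pdx (pdt w) p.1 p.2)
    exact ((((contDiff_const.mul hvt').mul hs').add
        (((contDiff_const.mul hs').mul hwx').mul hwt')).add
        ((contDiff_const.mul hwt').mul ((contDiff_const.mul hwxtt').sub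
          (contDiff_const.mul hwxxx')))).add
      (((contDiff_const.mul hwxx').mul hwxt'))
  -- the pointwise conservation-law identity
  have claimA : ∀ t ∈ Set.Icc (0:ℝ) T, ∀ x ∈ Set.Ioo (0:ℝ) L,
      pdt (EBFi h ρ α11 α1 v w s) x t = pdx (EBG h ρ α11 α1 v w s) x t := by
    intro t ht x hx
    have hLeq : pdt (EBFi h ρ α11 α1 v w s) x t
        = ρ * (2 * pdt v x t * pdt (pdt v) x t
            + h ^ 2 / 12 * (2 * pdt (pdx w) x t * pdt (pdt (pdx w)) x t)
            + 2 * pdt w x t * pdt (pdt w) x t)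
          + α11 * (2 * s x t * pdt s x t)
          + α1 * h ^ 2 / 12 * (2 * pdx (pdx w) x t * pdt (pdx (pdx w)) x t) := by
      have h1 := (EBaux.hasDerivAt_pdt hvt x t).pow 2
      have h2 := ((EBaux.hasDerivAt_pdt hwtx x t).pow 2).const_mul (h ^ 2 / 12)
      have h3 := (EBaux.hasDerivAt_pdt hwt x t).pow 2
      have h4 := ((EBaux.hasDerivAt_pdt hscd x t).pow 2).const_mul α11
      have h5 := ((EBaux.hasDerivAt_pdt hwxx x t).pow 2).const_mul (α1 * h ^ 2 / 12)
      have hsum := ((((h1.add h2).add h3).const_mul ρ).add h4).add h5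
      have hD : HasDerivAt (fun τ => EBFi h ρ α11 α1 v w s x τ)
          (ρ * (2 * pdt v x t * pdt (pdt v) x t
            + h ^ 2 / 12 * (2 * pdt (pdx w) x t * pdt (pdt (pdx w)) x t)
            + 2 * pdt w x t * pdt (pdt w) x t)
          + α11 * (2 * s x t * pdt s x t)
          + α1 * h ^ 2 / 12 * (2 * pdx (pdx w) x t * pdt (pdx (pdx w)) x t)) t := by
        convert hsum using 1 <;> first
          | rfl
          | (push_cast; ring)
      exact hD.deriv
    have hReq : pdx (EBG h ρ α11 α1 v w s) x t
        = 2 * α11 * pdx (pdt v) x t * s x t + 2 * α11 * pdt v x t * pdx s x t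
          + 2 * α11 * (pdx s x t * pdx w x t + s x t * pdx (pdx w) x t) * pdt w x t
          + 2 * α11 * s x t * pdx w x t * pdx (pdt w) x t
          + 2 * pdx (pdt w) x t * ((ρ * h ^ 2 / 12) * pdx (pdt (pdt w)) x t
              - (α1 * h ^ 2 / 12) * pdx (pdx (pdx w)) x t)
          + 2 * pdt w x t * ((ρ * h ^ 2 / 12) * pdx (pdx (pdt (pdt w))) x t
              - (α1 * h ^ 2 / 12) * pdx (pdx (pdx (pdx w))) x t)
          + (α1 * h ^ 2 / 6) * pdx (pdx (pdx w)) x t * pdx (pdt w) x t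
          + (α1 * h ^ 2 / 6) * pdx (pdx w) x t * pdx (pdx (pdt w)) x t := by
      have g1 := ((EBaux.hasDerivAt_pdx hvt x t).const_mul (2 * α11)).mul
        (EBaux.hasDerivAt_pdx hscd x t)
      have g2 := (((EBaux.hasDerivAt_pdx hscd x t).const_mul (2 * α11)).mul
        (EBaux.hasDerivAt_pdx hwx x t)).mul (EBaux.hasDerivAt_pdx hwt x t)
      have g3 := ((EBaux.hasDerivAt_pdx hwt x t).const_mul 2).mul
        (((EBaux.hasDerivAt_pdx hwxtt x t).const_mul (ρ * h ^ 2 / 12)).sub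
          ((EBaux.hasDerivAt_pdx hwxxx x t).const_mul (α1 * h ^ 2 / 12)))
      have g4 := ((EBaux.hasDerivAt_pdx hwxx x t).const_mul (α1 * h ^ 2 / 6)).mul
        (EBaux.hasDerivAt_pdx hwxt x t)
      have hsum := ((g1.add g2).add g3).add g4
      have hD : HasDerivAt (fun y => EBG h ρ α11 α1 v w s y t)
          (2 * α11 * pdx (pdt v) x t * s x t + 2 * α11 * pdt v x t * pdx s x t
          + 2 * α11 * (pdx s x t * pdx w x t + s x t * pdx (pdx w) x t) * pdt w x t
          + 2 * α11 * s x t * pdx w x t * pdx (pdt w) x t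
          + 2 * pdx (pdt w) x t * ((ρ * h ^ 2 / 12) * pdx (pdt (pdt w)) x t
              - (α1 * h ^ 2 / 12) * pdx (pdx (pdx w)) x t)
          + 2 * pdt w x t * ((ρ * h ^ 2 / 12) * pdx (pdx (pdt (pdt w))) x t
              - (α1 * h ^ 2 / 12) * pdx (pdx (pdx (pdx w))) x t)
          + (α1 * h ^ 2 / 6) * pdx (pdx (pdx w)) x t * pdx (pdt w) x t
          + (α1 * h ^ 2 / 6) * pdx (pdx w) x t * pdx (pdx (pdt w)) x t) x := by
        convert hsum using 1 <;> first
          | rfl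
          | (simp only [Pi.add_apply, Pi.mul_apply, Pi.sub_apply]; push_cast; ring)
      exact hD.deriv
    have hE1 : ρ * pdt (pdt v) x t - α11 * pdx s x t = 0 := by
      have e1 := heq1 t ht x hx
      rcases mul_eq_zero.mp (show h * (ρ * pdt (pdt v) x t - α11 * pdx s x t) = 0 by
        linear_combination e1) with h' | h'
      · exact absurd h' hne
      · exact h'
    have hE2 : ρ * pdt (pdt w) x t - (ρ * h ^ 2 / 12) * pdx (pdx (pdt (pdt w))) x t
        + (α1 * h ^ 2 / 12) * pdx (pdx (pdx (pdx w))) x t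
        - α11 * (pdx s x t * pdx w x t + s x t * pdx (pdx w) x t) = 0 := by
      have e2 := heq2 t ht x hx
      rw [hprod x t] at e2
      rcases mul_eq_zero.mp (show h * (ρ * pdt (pdt w) x t
          - (ρ * h ^ 2 / 12) * pdx (pdx (pdt (pdt w))) x t
          + (α1 * h ^ 2 / 12) * pdx (pdx (pdx (pdx w))) x t
          - α11 * (pdx s x t * pdx w x t + s x t * pdx (pdx w) x t)) = 0 by
        linear_combination e2) with h' | h'
      · exact absurd h' hne
      · exact h'
    rw [hLeq, hReq, S2 x t, S3 x t, S1 x t, hst_eq x t]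
    linear_combination (2 * pdt v x t) * hE1 + (2 * pdt w x t) * hE2
  -- the flux vanishes at the free end
  have claimB : ∀ t ∈ Set.Icc (0:ℝ) T, EBG h ρ α11 α1 v w s L t = 0 := by
    intro t ht
    have b1 := hbc1 t ht
    have b2 := hbc2 t ht
    have b3 := hbc3 t ht
    have b3' : (ρ * h ^ 2 / 12) * pdx (pdt (pdt w)) L t
        - (α1 * h ^ 2 / 12) * pdx (pdx (pdx w)) L t = 0 := by
      rcases mul_eq_zero.mp (show h * ((ρ * h ^ 2 / 12) * pdx (pdt (pdt w)) L t
          - (α1 * h ^ 2 / 12) * pdx (pdx (pdx w)) L t) = 0 by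
        linear_combination b3) with h' | h'
      · exact absurd h' hne
      · exact h'
    simp only [EBG]
    linear_combination (2 * α11 * pdt v L t + 2 * α11 * pdx w L t * pdt w L t) * b2
      + ((α1 * h ^ 2 / 6) * pdx (pdt w) L t) * b1 + (2 * pdt w L t) * b3'
  -- the flux vanishes at the clamped end (interior times)
  have claimC : ∀ t ∈ Set.Ioo (0:ℝ) T, EBG h ρ α11 α1 v w s 0 t = 0 := by
    intro t ht
    have hmem : Set.Ioo (0:ℝ) T ∈ 𝓝 t := isOpen_Ioo.mem_nhds ht
    have hvt0 : pdt v 0 t = 0 := by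
      have hev : (fun τ => v 0 τ) =ᶠ[𝓝 t] fun _ => 0 := by
        filter_upwards [hmem] with τ hτ
        exact (hclamped τ (Set.Ioo_subset_Icc_self hτ)).1
      show deriv (fun τ => v 0 τ) t = 0
      rw [hev.deriv_eq]; exact deriv_const t 0
    have hwt0 : pdt w 0 t = 0 := by
      have hev : (fun τ => w 0 τ) =ᶠ[𝓝 t] fun _ => 0 := by
        filter_upwards [hmem] with τ hτ
        exact (hclamped τ (Set.Ioo_subset_Icc_self hτ)).2.1
      show deriv (fun τ => w 0 τ) t = 0
      rw [hev.deriv_eq]; exact deriv_const t 0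
    have hwxt0 : pdx (pdt w) 0 t = 0 := by
      rw [← S1 0 t]
      have hev : (fun τ => pdx w 0 τ) =ᶠ[𝓝 t] fun _ => 0 := by
        filter_upwards [hmem] with τ hτ
        exact (hclamped τ (Set.Ioo_subset_Icc_self hτ)).2.2
      show deriv (fun τ => pdx w 0 τ) t = 0
      rw [hev.deriv_eq]; exact deriv_const t 0
    have hwx0 : pdx w 0 t = 0 := (hclamped t (Set.Ioo_subset_Icc_self ht)).2.2
    simp only [EBG, hvt0, hwt0, hwxt0, hwx0]
    ring
  -- the energy written via the density
  have hEnergy : ∀ t : ℝ, energyEB L h ρ α11 α1 v w t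
      = (h / 2) * ∫ x in (0:ℝ)..L, EBFi h ρ α11 α1 v w s x t := by
    intro t
    simp only [energyEB]
    congr 1
    apply intervalIntegral.integral_congr
    intro x _
    simp only [EBFi]
    rw [hs x t]
  -- differentiation under the integral sign
  have hFtcont : Continuous (Function.uncurry (pdt (EBFi h ρ α11 α1 v w s))) :=
    (EBaux.contDiff_pdt hFcd).continuous
  have hNd : ∀ t₀ : ℝ, HasDerivAt (fun t => ∫ x in (0:ℝ)..L, EBFi h ρ α11 α1 v w s x t)
      (∫ x in (0:ℝ)..L, pdt (EBFi h ρ α11 α1 v w s) x t₀) t₀ := by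
    intro t₀
    obtain ⟨C, hC⟩ := (IsCompact.prod (isCompact_Icc (a := (0:ℝ)) (b := L))
      (isCompact_Icc (a := t₀ - 1) (b := t₀ + 1))).exists_bound_of_continuousOn
      hFtcont.continuousOn
    have main := intervalIntegral.hasDerivAt_integral_of_dominated_loc_of_deriv_le
      (F := fun t x => EBFi h ρ α11 α1 v w s x t)
      (F' := fun t x => pdt (EBFi h ρ α11 α1 v w s) x t)
      (bound := fun _ => C) (a := 0) (b := L) (x₀ := t₀) (μ := volume)
      (ball_mem_nhds t₀ one_pos)
      (Filter.Eventually.of_forall fun t =>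
        (EBaux.cont_slice_x hFcd t).aestronglyMeasurable)
      ((EBaux.cont_slice_x hFcd t₀).intervalIntegrable 0 L)
      ((EBaux.cont_slice_x (EBaux.contDiff_pdt hFcd) t₀).aestronglyMeasurable)
      (Filter.Eventually.of_forall fun x hxmem t htball => by
        rw [Set.uIoc_of_le hL.le] at hxmem
        have ht1 : |t - t₀| < 1 := by
          have := mem_ball_iff_norm.mp htball
          simpa [Real.norm_eq_abs] using this
        have ht2 := abs_lt.mp ht1
        exact hC (x, t) ⟨⟨hxmem.1.le, hxmem.2⟩, ⟨by linarith, by linarith⟩⟩)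
      (intervalIntegrable_const)
      (Filter.Eventually.of_forall fun x _ t _ => EBaux.hasDerivAt_pdt hFcd x t)
    exact main.2
  -- the time derivative of the total (rescaled) energy vanishes in the interior
  have hzero : ∀ t ∈ Set.Ioo (0:ℝ) T,
      (∫ x in (0:ℝ)..L, pdt (EBFi h ρ α11 α1 v w s) x t) = 0 := by
    intro t ht
    have htIcc : t ∈ Set.Icc (0:ℝ) T := Set.Ioo_subset_Icc_self ht
    have hae : ∀ᵐ x : ℝ, x ≠ L := by
      rw [ae_iff]
      simp only [not_not, Set.setOf_eq_eq_singleton]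
      exact measure_singleton L
    have hcongr : (∫ x in (0:ℝ)..L, pdt (EBFi h ρ α11 α1 v w s) x t)
        = ∫ x in (0:ℝ)..L, pdx (EBG h ρ α11 α1 v w s) x t := by
      apply intervalIntegral.integral_congr_ae
      filter_upwards [hae] with x hxne hxmem
      rw [Set.uIoc_of_le hL.le] at hxmem
      exact claimA t htIcc x ⟨hxmem.1, lt_of_le_of_ne hxmem.2 hxne⟩
    rw [hcongr,
      intervalIntegral.integral_eq_sub_of_hasDerivAt
        (fun x _ => EBaux.hasDerivAt_pdx hGcd x t)
        ((EBaux.cont_slice_x (EBaux.contDiff_pdx hGcd) t).intervalIntegrable 0 L),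
      claimB t htIcc, claimC t ht, sub_zero]
  -- conclude: the rescaled energy is constant on `[0, T]`
  have hNcont : Continuous (fun t => ∫ x in (0:ℝ)..L, EBFi h ρ α11 α1 v w s x t) := by
    have hdiff : Differentiable ℝ (fun t => ∫ x in (0:ℝ)..L, EBFi h ρ α11 α1 v w s x t) :=
      fun t => (hNd t).differentiableAt
    exact hdiff.continuous
  have hNconst : ∀ a ∈ Set.Ioo (0:ℝ) T, ∀ b ∈ Set.Ioo (0:ℝ) T, a ≤ b →
      (∫ x in (0:ℝ)..L, EBFi h ρ α11 α1 v w s x b)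
        = ∫ x in (0:ℝ)..L, EBFi h ρ α11 α1 v w s x a := by
    intro a ha b hb hab
    have key := constant_of_has_deriv_right_zero
      (f := fun t => ∫ x in (0:ℝ)..L, EBFi h ρ α11 α1 v w s x t) (a := a) (b := b)
      hNcont.continuousOn
      (fun x hx => by
        have hxI : x ∈ Set.Ioo (0:ℝ) T := ⟨lt_of_lt_of_le ha.1 hx.1, lt_trans hx.2 hb.2⟩
        have h0 : HasDerivAt (fun t => ∫ x in (0:ℝ)..L, EBFi h ρ α11 α1 v w s x t) 0 x := by
          have := hNd x
          rwa [hzero x hxI] at this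
        exact h0.hasDerivWithinAt)
    exact key b ⟨hab, le_refl b⟩
  have hmid : T / 2 ∈ Set.Ioo (0:ℝ) T := ⟨by linarith, by linarith⟩
  have hIoo : ∀ t ∈ Set.Ioo (0:ℝ) T,
      (∫ x in (0:ℝ)..L, EBFi h ρ α11 α1 v w s x t)
        = ∫ x in (0:ℝ)..L, EBFi h ρ α11 α1 v w s x (T / 2) := by
    intro t ht
    rcases le_total t (T / 2) with hle | hle
    · exact (hNconst t ht (T / 2) hmid hle).symm
    · exact hNconst (T / 2) hmid t ht hle
  have hN0 : (∫ x in (0:ℝ)..L, EBFi h ρ α11 α1 v w s x 0)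
      = ∫ x in (0:ℝ)..L, EBFi h ρ α11 α1 v w s x (T / 2) := by
    have h1 : Tendsto (fun t => ∫ x in (0:ℝ)..L, EBFi h ρ α11 α1 v w s x t) (𝓝[>] (0:ℝ))
        (𝓝 (∫ x in (0:ℝ)..L, EBFi h ρ α11 α1 v w s x 0)) :=
      (hNcont.continuousAt).continuousWithinAt
    have h2 : Tendsto (fun t => ∫ x in (0:ℝ)..L, EBFi h ρ α11 α1 v w s x t) (𝓝[>] (0:ℝ))
        (𝓝 (∫ x in (0:ℝ)..L, EBFi h ρ α11 α1 v w s x (T / 2))) := by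
      apply Tendsto.congr' _ tendsto_const_nhds
      filter_upwards [Ioo_mem_nhdsGT_of_mem (⟨le_refl 0, hT⟩ : (0:ℝ) ∈ Set.Ico 0 T)]
        with τ hτ
      exact (hIoo τ hτ).symm
    exact tendsto_nhds_unique h1 h2
  have hNT : (∫ x in (0:ℝ)..L, EBFi h ρ α11 α1 v w s x T)
      = ∫ x in (0:ℝ)..L, EBFi h ρ α11 α1 v w s x (T / 2) := by
    have h1 : Tendsto (fun t => ∫ x in (0:ℝ)..L, EBFi h ρ α11 α1 v w s x t) (𝓝[<] T)
        (𝓝 (∫ x in (0:ℝ)..L, EBFi h ρ α11 α1 v w s x T)) :=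
      (hNcont.continuousAt).continuousWithinAt
    have h2 : Tendsto (fun t => ∫ x in (0:ℝ)..L, EBFi h ρ α11 α1 v w s x t) (𝓝[<] T)
        (𝓝 (∫ x in (0:ℝ)..L, EBFi h ρ α11 α1 v w s x (T / 2))) := by
      apply Tendsto.congr' _ tendsto_const_nhds
      filter_upwards [Ioo_mem_nhdsLT_of_mem (⟨hT, le_refl T⟩ : T ∈ Set.Ioc 0 T)]
        with τ hτ
      exact (hIoo τ hτ).symm
    exact tendsto_nhds_unique h1 h2
  intro t ht
  rw [hEnergy t, hEnergy 0]
  congr 1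
  rw [hN0]
  rcases eq_or_lt_of_le ht.1 with h0 | h0
  · rw [← h0]
    exact hN0
  · rcases eq_or_lt_of_le ht.2 with hT' | hT'
    · rw [hT']
      exact hNT
    · exact hIoo t ⟨h0, hT'⟩
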